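/- arXiv:2308.08751 — 2 statements merged into one kernel-verified Lean document; each statement's English description precedes it below -/
import Mathlib

section
/- Let Ĉ ∈ S^d₊, let Γ̂ ∈ ℝ^{k×k} be symmetric, let M ∈ ℝ^{d×k} be arbitrary, let H ∈ ℝ^{k×d}, let Γ ∈ S^k₊₊, and set O = 𝒦(Ĉ)(Γ̂ − Γ)𝒦(Ĉ)ᵀ + (I − 𝒦(Ĉ)H) M 𝒦(Ĉ)ᵀ + 𝒦(Ĉ) Mᵀ (I − Hᵀ𝒦(Ĉ)ᵀ). Then Tr(O) ≤ |H|² |Γ̂ − Γ| |Γ⁻¹|² |Ĉ| Tr(Ĉ) + 2(1 + |Ĉ| |H|² |Γ⁻¹|) |Γ⁻¹| |M| |H| Tr(Ĉ). -/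
open MeasureTheory ProbabilityTheory Matrix
open scoped BigOperators

noncomputable section

/-- Euclidean norm of a vector `x ∈ ℝ^d`. -/
def vecNorm {d : ℕ} (x : Fin d → ℝ) : ℝ := Real.sqrt (∑ i, x i ^ 2)

/-- Operator (spectral) norm of a matrix, viewed as a linear map between Euclidean spaces. -/
def opNorm {m n : ℕ} (M : Matrix (Fin m) (Fin n) ℝ) : ℝ :=
  ‖LinearMap.toContinuousLinearMap (Matrix.toEuclideanLin M)‖

/-- Effective dimension `r₂(Q) = Tr(Q)/|Q|`. -/
def effDim {d : ℕ} (Q : Matrix (Fin d) (Fin d) ℝ) : ℝ := Q.trace / opNorm Q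

/-- `L^q` norm `(E |X|^q)^{1/q}` of a real random variable. -/
def LqNorm {Ω : Type*} [MeasurableSpace Ω] (P : Measure Ω) (q : ℝ) (X : Ω → ℝ) : ℝ :=
  (∫ ω, |X ω| ^ q ∂P) ^ (1 / q)

/-- A random vector `X` is Gaussian with mean `m` and covariance `S`:
every linear functional of it is a real Gaussian with the corresponding parameters. -/
def IsGaussianVec {Ω : Type*} [MeasurableSpace Ω] {d : ℕ} (P : Measure Ω)
    (X : Ω → Fin d → ℝ) (m : Fin d → ℝ) (S : Matrix (Fin d) (Fin d) ℝ) : Prop :=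
  ∀ v : Fin d → ℝ,
    P.map (fun ω => v ⬝ᵥ X ω)
      = gaussianReal (v ⬝ᵥ m) (Real.toNNReal (v ⬝ᵥ S.mulVec v))

/-- Sample mean of an ensemble of vectors. -/
def sampleMean {N d : ℕ} (v : Fin N → Fin d → ℝ) : Fin d → ℝ := (N : ℝ)⁻¹ • ∑ n, v n

/-- `1/(N-1)`-normalized sample covariance of an ensemble of vectors. -/
def sampleCov {N d : ℕ} (v : Fin N → Fin d → ℝ) : Matrix (Fin d) (Fin d) ℝ :=
  ((N : ℝ) - 1)⁻¹ • ∑ n, vecMulVec (v n - sampleMean v) (v n - sampleMean v)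

/-- `1/(N-1)`-normalized sample cross-covariance of two ensembles of vectors. -/
def sampleCrossCov {N d k : ℕ} (v : Fin N → Fin d → ℝ) (w : Fin N → Fin k → ℝ) :
    Matrix (Fin d) (Fin k) ℝ :=
  ((N : ℝ) - 1)⁻¹ • ∑ n, vecMulVec (v n - sampleMean v) (w n - sampleMean w)

/-- Kalman gain operator `𝒦(C) = C Hᵀ (H C Hᵀ + Γ)⁻¹`. -/
def kGain {d k : ℕ} (H : Matrix (Fin k) (Fin d) ℝ) (Γ : Matrix (Fin k) (Fin k) ℝ)
    (C : Matrix (Fin d) (Fin d) ℝ) : Matrix (Fin d) (Fin k) ℝ :=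
  C * Hᵀ * (H * C * Hᵀ + Γ)⁻¹

/-- Mean-update operator `ℳ(m, C; y) = m + 𝒦(C)(y − Hm)`. -/
def meanUpdate {d k : ℕ} (H : Matrix (Fin k) (Fin d) ℝ) (Γ : Matrix (Fin k) (Fin k) ℝ)
    (m : Fin d → ℝ) (C : Matrix (Fin d) (Fin d) ℝ) (y : Fin k → ℝ) : Fin d → ℝ :=
  m + (kGain H Γ C).mulVec (y - H.mulVec m)

/-- Covariance-update operator `𝒞(C) = (I − 𝒦(C)H)C`. -/
def covUpdate {d k : ℕ} (H : Matrix (Fin k) (Fin d) ℝ) (Γ : Matrix (Fin k) (Fin k) ℝ)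
    (C : Matrix (Fin d) (Fin d) ℝ) : Matrix (Fin d) (Fin d) ℝ :=
  (1 - kGain H Γ C * H) * C

/-- Kalman filter: `(KF ... j).1` is the analysis mean `μ⁽ʲ⁾` and `(KF ... j).2` the
analysis covariance `Σ⁽ʲ⁾`. -/
def KF {d k : ℕ} (A : Matrix (Fin d) (Fin d) ℝ) (H : Matrix (Fin k) (Fin d) ℝ)
    (Ξ : Matrix (Fin d) (Fin d) ℝ) (Γ : Matrix (Fin k) (Fin k) ℝ)
    (μ0 : Fin d → ℝ) (S0 : Matrix (Fin d) (Fin d) ℝ) (y : ℕ → Fin k → ℝ) :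
    ℕ → (Fin d → ℝ) × Matrix (Fin d) (Fin d) ℝ
  | 0 => (μ0, S0)
  | j + 1 =>
      let prev := KF A H Ξ Γ μ0 S0 y j
      let m := A.mulVec prev.1
      let C := A * prev.2 * Aᵀ + Ξ
      (meanUpdate H Γ m C (y (j + 1)), covUpdate H Γ C)

-- Positive-semidefinite square root (junk value `0` off the psd matrices).
open Classical in
def matSqrt {d : ℕ} (S : Matrix (Fin d) (Fin d) ℝ) : Matrix (Fin d) (Fin d) ℝ :=
  if h : S.PosSemidef then
    h.1.eigenvectorUnitary.1 * diagonal ((↑) ∘ (√·) ∘ h.1.eigenvalues) *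
      (star h.1.eigenvectorUnitary : Matrix (Fin d) (Fin d) ℝ)
  else 0

/-- The stochastic (perturbed-observation) REnKF, driven by the noise arrays
`Z` (resampling, standard Gaussian), `ξ` (dynamics noise) and `η` (observation noise):
`(REnKF ... j ω).1 = μ̂⁽ʲ⁾(ω)` and `(REnKF ... j ω).2 = Σ̂⁽ʲ⁾(ω)`.
The resampled ensemble at time `j` is `μ̂⁽ʲ⁾ + Σ̂⁽ʲ⁾^{1/2} Z⁽ʲ⁺¹⁾ₙ`, which realizes
i.i.d. `N(μ̂⁽ʲ⁾, Σ̂⁽ʲ⁾)` draws conditionally on the past. -/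
def REnKF {Ω : Type*} {d k N : ℕ} (A : Matrix (Fin d) (Fin d) ℝ) (H : Matrix (Fin k) (Fin d) ℝ)
    (Γ : Matrix (Fin k) (Fin k) ℝ) (μ0 : Fin d → ℝ) (S0 : Matrix (Fin d) (Fin d) ℝ)
    (y : ℕ → Fin k → ℝ)
    (Z ξ : ℕ → Fin N → Ω → Fin d → ℝ) (η : ℕ → Fin N → Ω → Fin k → ℝ) :
    ℕ → Ω → (Fin d → ℝ) × Matrix (Fin d) (Fin d) ℝ
  | 0 => fun _ => (μ0, S0)
  | j + 1 => fun ω =>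
      let prev := REnKF A H Γ μ0 S0 y Z ξ η j ω
      let uhat : Fin N → Fin d → ℝ :=
        fun n => A.mulVec (prev.1 + (matSqrt prev.2).mulVec (Z (j + 1) n ω)) + ξ (j + 1) n ω
      let K := kGain H Γ (sampleCov uhat)
      let u' : Fin N → Fin d → ℝ :=
        fun n => (1 - K * H).mulVec (uhat n) + K.mulVec (y (j + 1) + η (j + 1) n ω)
      (sampleMean u', sampleCov u')

/-- Index type for the three mutually independent noise arrays. -/
def NoiseType (d k N : ℕ) : (ℕ × Fin N) ⊕ ((ℕ × Fin N) ⊕ (ℕ × Fin N)) → Type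
  | Sum.inl _ => Fin d → ℝ
  | Sum.inr (Sum.inl _) => Fin d → ℝ
  | Sum.inr (Sum.inr _) => Fin k → ℝ

def noiseσ (d k N : ℕ) : ∀ i, MeasurableSpace (NoiseType d k N i)
  | Sum.inl _ => (inferInstance : MeasurableSpace (Fin d → ℝ))
  | Sum.inr (Sum.inl _) => (inferInstance : MeasurableSpace (Fin d → ℝ))
  | Sum.inr (Sum.inr _) => (inferInstance : MeasurableSpace (Fin k → ℝ))

/-- The three noise arrays, bundled as a single indexed family of random variables. -/
def noiseFun {Ω : Type*} {d k N : ℕ} (Z ξ : ℕ → Fin N → Ω → Fin d → ℝ)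
    (η : ℕ → Fin N → Ω → Fin k → ℝ) : ∀ i, Ω → NoiseType d k N i
  | Sum.inl p => Z p.1 p.2
  | Sum.inr (Sum.inl p) => ξ p.1 p.2
  | Sum.inr (Sum.inr p) => η p.1 p.2

/-! The gain is `K = Ĉ Hᵀ S⁻¹` with `S = H Ĉ Hᵀ + Γ`; as `Ĉ` and `S` are symmetric, `Kᵀ = S⁻¹ H Ĉ`.
Hence, after a cyclic permutation, each term of the offset is the trace of some `X Ĉ`, and
`Tr(X Ĉ) ≤ |X| Tr Ĉ` for `Ĉ ⪰ 0` (decompose `Ĉ = ∑ vᵢ vᵢᵀ`). The norms `|X|` are bounded by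
submultiplicativity and `|S⁻¹| ≤ |Γ⁻¹|`, which holds because `xᵀ S x ≥ xᵀ Γ x ≥ |x|² / |Γ⁻¹|`.
The last two terms of the offset are transposes of each other, whence the factor `2`. -/

open scoped Matrix.Norms.L2Operator

namespace Matrix

open scoped MatrixOrder
open WithLp (toLp)

variable {l m n : Type*} [Fintype l] [Fintype m] [Fintype n]

lemma l2_opNorm_mul_le_of_le {𝕜 : Type*} [RCLike 𝕜] [DecidableEq m] [DecidableEq n]
    {A : Matrix l m 𝕜} {B : Matrix m n 𝕜} {a b : ℝ} (ha : ‖A‖ ≤ a) (hb : ‖B‖ ≤ b) :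
    ‖A * B‖ ≤ a * b :=
  (l2_opNorm_mul A B).trans (mul_le_mul ha hb (norm_nonneg _) ((norm_nonneg A).trans ha))

lemma l2_opNorm_transpose [DecidableEq m] [DecidableEq n] (A : Matrix m n ℝ) : ‖Aᵀ‖ = ‖A‖ := by
  rw [← conjTranspose_eq_transpose_of_trivial, l2_opNorm_conjTranspose]

lemma norm_toLp_sq (x : n → ℝ) : ‖toLp 2 x‖ ^ 2 = x ⬝ᵥ x := by
  rw [← real_inner_self_eq_norm_sq, EuclideanSpace.inner_toLp_toLp, star_trivial]

lemma dotProduct_le_norm_toLp_mul (x y : n → ℝ) : x ⬝ᵥ y ≤ ‖toLp 2 x‖ * ‖toLp 2 y‖ := by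
  simpa [EuclideanSpace.inner_toLp_toLp, dotProduct_comm] using
    real_inner_le_norm (toLp 2 x) (toLp 2 y)

lemma dotProduct_mulVec_le_l2_opNorm_mul [DecidableEq n] (A : Matrix n n ℝ) (x : n → ℝ) :
    x ⬝ᵥ A *ᵥ x ≤ ‖A‖ * (x ⬝ᵥ x) :=
  calc x ⬝ᵥ A *ᵥ x ≤ ‖toLp 2 x‖ * ‖toLp 2 (A *ᵥ x)‖ := dotProduct_le_norm_toLp_mul _ _
    _ ≤ ‖toLp 2 x‖ * (‖A‖ * ‖toLp 2 x‖) := by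
      gcongr; exact A.l2_opNorm_mulVec (toLp 2 x)
    _ = ‖A‖ * (x ⬝ᵥ x) := by rw [← norm_toLp_sq]; ring

lemma PosSemidef.trace_mul_le_l2_opNorm_mul [DecidableEq n] {C : Matrix n n ℝ}
    (hC : C.PosSemidef) (B : Matrix n n ℝ) : (B * C).trace ≤ ‖B‖ * C.trace := by
  obtain ⟨r, v, rfl⟩ := posSemidef_iff_eq_sum_vecMulVec.mp hC
  simp only [Finset.mul_sum, trace_sum, mul_vecMulVec, trace_vecMulVec, star_trivial]
  gcongr with i
  rw [dotProduct_comm]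
  exact dotProduct_mulVec_le_l2_opNorm_mul B (v i)

lemma dotProduct_mulVec_mulVec_self (R A : Matrix n n ℝ) (x : n → ℝ) :
    (R *ᵥ x) ⬝ᵥ A *ᵥ (R *ᵥ x) = x ⬝ᵥ (Rᵀ * A * R) *ᵥ x := by
  rw [← mulVec_mulVec, ← mulVec_mulVec, dotProduct_mulVec x Rᵀ, vecMul_transpose]

lemma PosDef.dotProduct_self_le_l2_opNorm_inv_mul [DecidableEq n] {Γ : Matrix n n ℝ}
    (hΓ : Γ.PosDef) (x : n → ℝ) : x ⬝ᵥ x ≤ ‖Γ⁻¹‖ * (x ⬝ᵥ Γ *ᵥ x) := by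
  set R := CFC.sqrt Γ
  have hRR : R * R = Γ := CFC.sqrt_mul_sqrt_self Γ hΓ.posSemidef.nonneg
  have hRT : Rᵀ = R := by
    rw [← conjTranspose_eq_transpose_of_trivial]
    exact (nonneg_iff_posSemidef.mp (CFC.sqrt_nonneg Γ)).isHermitian
  have hR : IsUnit R.det :=
    (isUnit_iff_isUnit_det R).mp <| isUnit_of_mul_isUnit_left <| hRR ▸ hΓ.isUnit
  have hRΓR : Rᵀ * Γ⁻¹ * R = 1 := by
    rw [hRT, ← hRR, mul_inv_rev, ← mul_assoc R, mul_nonsing_inv _ hR, one_mul,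
      nonsing_inv_mul _ hR]
  calc x ⬝ᵥ x = (R *ᵥ x) ⬝ᵥ Γ⁻¹ *ᵥ (R *ᵥ x) := by
        rw [dotProduct_mulVec_mulVec_self, hRΓR, one_mulVec]
    _ ≤ ‖Γ⁻¹‖ * ((R *ᵥ x) ⬝ᵥ (R *ᵥ x)) := dotProduct_mulVec_le_l2_opNorm_mul _ _
    _ = ‖Γ⁻¹‖ * (x ⬝ᵥ Γ *ᵥ x) := by
        simpa [hRT, hRR] using congrArg (‖Γ⁻¹‖ * ·) (dotProduct_mulVec_mulVec_self R 1 x)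

lemma l2_opNorm_inv_le_of_dotProduct_le [DecidableEq n] {S : Matrix n n ℝ} (hS : IsUnit S.det)
    {c : ℝ} (hc : 0 ≤ c) (h : ∀ x, x ⬝ᵥ x ≤ c * (x ⬝ᵥ S *ᵥ x)) : ‖S⁻¹‖ ≤ c := by
  have hbound (x : n → ℝ) : ‖toLp 2 x‖ ≤ c * ‖toLp 2 (S *ᵥ x)‖ := by
    rcases (norm_nonneg (toLp 2 x)).eq_or_lt with hx | hx
    · rw [← hx]; positivity
    refine le_of_mul_le_mul_left ?_ hx
    calc ‖toLp 2 x‖ * ‖toLp 2 x‖ = x ⬝ᵥ x := by rw [← sq, norm_toLp_sq]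
      _ ≤ c * (x ⬝ᵥ S *ᵥ x) := h x
      _ ≤ c * (‖toLp 2 x‖ * ‖toLp 2 (S *ᵥ x)‖) := by gcongr; exact dotProduct_le_norm_toLp_mul _ _
      _ = ‖toLp 2 x‖ * (c * ‖toLp 2 (S *ᵥ x)‖) := by ring
  rw [l2_opNorm_def]
  refine ContinuousLinearMap.opNorm_le_bound _ hc fun y => ?_
  simpa [toLpLin_apply, mulVec_mulVec, mul_nonsing_inv _ hS] using hbound (S⁻¹ *ᵥ y.ofLp)

lemma PosDef.l2_opNorm_inv_add_le [DecidableEq n] {Γ P : Matrix n n ℝ} (hΓ : Γ.PosDef)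
    (hP : P.PosSemidef) : ‖(P + Γ)⁻¹‖ ≤ ‖Γ⁻¹‖ := by
  refine l2_opNorm_inv_le_of_dotProduct_le ((isUnit_iff_isUnit_det _).mp
    (PosDef.posSemidef_add hP hΓ).isUnit) (norm_nonneg _) fun x => ?_
  have hPx : 0 ≤ x ⬝ᵥ P *ᵥ x := by simpa using hP.dotProduct_mulVec_nonneg x
  calc x ⬝ᵥ x ≤ ‖Γ⁻¹‖ * (x ⬝ᵥ Γ *ᵥ x) := hΓ.dotProduct_self_le_l2_opNorm_inv_mul x
    _ ≤ ‖Γ⁻¹‖ * (x ⬝ᵥ (P + Γ) *ᵥ x) := by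
      rw [add_mulVec, dotProduct_add]; gcongr; linarith

end Matrix

section KalmanGain

variable {d k : ℕ} {H : Matrix (Fin k) (Fin d) ℝ} {Γ : Matrix (Fin k) (Fin k) ℝ}
  {C : Matrix (Fin d) (Fin d) ℝ}

lemma l2_opNorm_inv_mul_mul_transpose_add_le (hC : C.PosSemidef) (hΓ : Γ.PosDef) :
    ‖(H * C * Hᵀ + Γ)⁻¹‖ ≤ ‖Γ⁻¹‖ := by
  refine hΓ.l2_opNorm_inv_add_le ?_
  simpa only [conjTranspose_eq_transpose_of_trivial] using hC.mul_mul_conjTranspose_same H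

lemma transpose_kGain (hC : C.PosSemidef) (hΓ : Γ.PosDef) :
    (kGain H Γ C)ᵀ = (H * C * Hᵀ + Γ)⁻¹ * H * C := by
  have hCT : Cᵀ = C := (isHermitian_iff_isSymm.mp hC.1).eq
  have hΓT : Γᵀ = Γ := (isHermitian_iff_isSymm.mp hΓ.1).eq
  simp only [kGain, transpose_mul, transpose_nonsing_inv, transpose_add, transpose_transpose, hCT,
    hΓT, Matrix.mul_assoc]

lemma l2_opNorm_kGain_le (hC : C.PosSemidef) (hΓ : Γ.PosDef) :
    ‖kGain H Γ C‖ ≤ ‖C‖ * ‖H‖ * ‖Γ⁻¹‖ :=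
  l2_opNorm_mul_le_of_le (l2_opNorm_mul_le_of_le le_rfl (l2_opNorm_transpose H).le)
    (l2_opNorm_inv_mul_mul_transpose_add_le hC hΓ)

lemma trace_kGain_mul_mul_transpose_le (hC : C.PosSemidef) (hΓ : Γ.PosDef)
    (D : Matrix (Fin k) (Fin k) ℝ) :
    (kGain H Γ C * D * (kGain H Γ C)ᵀ).trace ≤ ‖H‖ ^ 2 * ‖D‖ * ‖Γ⁻¹‖ ^ 2 * ‖C‖ * C.trace := by
  set S := H * C * Hᵀ + Γ
  have hS : ‖S⁻¹‖ ≤ ‖Γ⁻¹‖ := l2_opNorm_inv_mul_mul_transpose_add_le hC hΓ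
  set X := Hᵀ * S⁻¹ * D * S⁻¹ * H * C
  have hX : ‖X‖ ≤ ‖H‖ * ‖Γ⁻¹‖ * ‖D‖ * ‖Γ⁻¹‖ * ‖H‖ * ‖C‖ :=
    l2_opNorm_mul_le_of_le (l2_opNorm_mul_le_of_le (l2_opNorm_mul_le_of_le (l2_opNorm_mul_le_of_le
      (l2_opNorm_mul_le_of_le (l2_opNorm_transpose H).le hS) le_rfl) hS) le_rfl) le_rfl
  calc (kGain H Γ C * D * (kGain H Γ C)ᵀ).trace = (C * X).trace := by
        rw [transpose_kGain hC hΓ]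
        simp only [kGain, X, S, Matrix.mul_assoc]
    _ = (X * C).trace := trace_mul_comm C X
    _ ≤ ‖X‖ * C.trace := hC.trace_mul_le_l2_opNorm_mul X
    _ ≤ ‖H‖ * ‖Γ⁻¹‖ * ‖D‖ * ‖Γ⁻¹‖ * ‖H‖ * ‖C‖ * C.trace := by gcongr; exact hC.trace_nonneg
    _ = ‖H‖ ^ 2 * ‖D‖ * ‖Γ⁻¹‖ ^ 2 * ‖C‖ * C.trace := by ring

lemma trace_one_sub_kGain_mul_mul_mul_transpose_le (hC : C.PosSemidef) (hΓ : Γ.PosDef)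
    (M : Matrix (Fin d) (Fin k) ℝ) :
    ((1 - kGain H Γ C * H) * M * (kGain H Γ C)ᵀ).trace
      ≤ (1 + ‖C‖ * ‖H‖ ^ 2 * ‖Γ⁻¹‖) * ‖Γ⁻¹‖ * ‖M‖ * ‖H‖ * C.trace := by
  set K := kGain H Γ C
  set N := M * (H * C * Hᵀ + Γ)⁻¹ * H
  have hN : ‖N‖ ≤ ‖M‖ * ‖Γ⁻¹‖ * ‖H‖ :=
    l2_opNorm_mul_le_of_le
      (l2_opNorm_mul_le_of_le le_rfl (l2_opNorm_inv_mul_mul_transpose_add_le hC hΓ)) le_rfl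
  have hKH : ‖K‖ * ‖H‖ ≤ ‖C‖ * ‖H‖ ^ 2 * ‖Γ⁻¹‖ :=
    calc ‖K‖ * ‖H‖ ≤ ‖C‖ * ‖H‖ * ‖Γ⁻¹‖ * ‖H‖ := by gcongr; exact l2_opNorm_kGain_le hC hΓ
      _ = ‖C‖ * ‖H‖ ^ 2 * ‖Γ⁻¹‖ := by ring
  have hY : ‖N - K * (H * N)‖ ≤ (1 + ‖C‖ * ‖H‖ ^ 2 * ‖Γ⁻¹‖) * (‖M‖ * ‖Γ⁻¹‖ * ‖H‖) :=
    calc ‖N - K * (H * N)‖ ≤ ‖N‖ + ‖K * (H * N)‖ := norm_sub_le _ _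
      _ ≤ ‖N‖ + ‖K‖ * (‖H‖ * ‖N‖) := by
        gcongr; exact l2_opNorm_mul_le_of_le le_rfl (l2_opNorm_mul _ _)
      _ = (1 + ‖K‖ * ‖H‖) * ‖N‖ := by ring
      _ ≤ (1 + ‖C‖ * ‖H‖ ^ 2 * ‖Γ⁻¹‖) * (‖M‖ * ‖Γ⁻¹‖ * ‖H‖) := by gcongr
  calc ((1 - K * H) * M * Kᵀ).trace = ((N - K * (H * N)) * C).trace := by
        rw [transpose_kGain hC hΓ]
        simp only [N, sub_mul, one_mul, Matrix.mul_assoc]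
    _ ≤ ‖N - K * (H * N)‖ * C.trace := hC.trace_mul_le_l2_opNorm_mul _
    _ ≤ (1 + ‖C‖ * ‖H‖ ^ 2 * ‖Γ⁻¹‖) * (‖M‖ * ‖Γ⁻¹‖ * ‖H‖) * C.trace := by
        gcongr; exact hC.trace_nonneg
    _ = (1 + ‖C‖ * ‖H‖ ^ 2 * ‖Γ⁻¹‖) * ‖Γ⁻¹‖ * ‖M‖ * ‖H‖ * C.trace := by ring

end KalmanGain

lemma opNorm_eq_l2_opNorm {m n : ℕ} (A : Matrix (Fin m) (Fin n) ℝ) : opNorm A = ‖A‖ := rfl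

theorem offset_trace_bound_general (d k : ℕ)
    (Chat : Matrix (Fin d) (Fin d) ℝ) (hChat : Chat.PosSemidef)
    (Γhat : Matrix (Fin k) (Fin k) ℝ)
    (M : Matrix (Fin d) (Fin k) ℝ) (H : Matrix (Fin k) (Fin d) ℝ)
    (Γ : Matrix (Fin k) (Fin k) ℝ) (hΓ : Γ.PosDef) :
    (kGain H Γ Chat * (Γhat - Γ) * (kGain H Γ Chat)ᵀ
      + (1 - kGain H Γ Chat * H) * M * (kGain H Γ Chat)ᵀ
      + kGain H Γ Chat * Mᵀ * (1 - Hᵀ * (kGain H Γ Chat)ᵀ)).trace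
    ≤ opNorm H ^ 2 * opNorm (Γhat - Γ) * opNorm Γ⁻¹ ^ 2 * opNorm Chat * Chat.trace
      + 2 * (1 + opNorm Chat * opNorm H ^ 2 * opNorm Γ⁻¹) * opNorm Γ⁻¹
        * opNorm M * opNorm H * Chat.trace := by
  have hgain := trace_kGain_mul_mul_transpose_le hChat hΓ (Γhat - Γ) (H := H)
  have hcross := trace_one_sub_kGain_mul_mul_mul_transpose_le hChat hΓ M (H := H)
  set K := kGain H Γ Chat
  have hcross_transpose : K * Mᵀ * (1 - Hᵀ * Kᵀ) = ((1 - K * H) * M * Kᵀ)ᵀ := by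
    simp only [transpose_mul, transpose_sub, transpose_one,
      transpose_transpose, Matrix.mul_assoc]
  rw [trace_add, trace_add, hcross_transpose, trace_transpose]
  simp only [opNorm_eq_l2_opNorm]
  linarith

/-- **Trace of the offset** (Lemma 5.2). -/
theorem offset_trace_bound (d k : ℕ)
    (Chat : Matrix (Fin d) (Fin d) ℝ) (hChat : Chat.PosSemidef)
    (Γhat : Matrix (Fin k) (Fin k) ℝ) (hΓhat : Γhat.IsSymm)
    (M : Matrix (Fin d) (Fin k) ℝ) (H : Matrix (Fin k) (Fin d) ℝ)
    (Γ : Matrix (Fin k) (Fin k) ℝ) (hΓ : Γ.PosDef) :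
    (kGain H Γ Chat * (Γhat - Γ) * (kGain H Γ Chat)ᵀ
      + (1 - kGain H Γ Chat * H) * M * (kGain H Γ Chat)ᵀ
      + kGain H Γ Chat * Mᵀ * (1 - Hᵀ * (kGain H Γ Chat)ᵀ)).trace
    ≤ opNorm H ^ 2 * opNorm (Γhat - Γ) * opNorm Γ⁻¹ ^ 2 * opNorm Chat * Chat.trace
      + 2 * (1 + opNorm Chat * opNorm H ^ 2 * opNorm Γ⁻¹) * opNorm Γ⁻¹
        * opNorm M * opNorm H * Chat.trace :=
  offset_trace_bound_general d k Chat hChat Γhat M H Γ hΓ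

end
end

section
/- Let Q ∈ S^d₊, Γ ∈ S^k₊₊, and H ∈ ℝ^{k×d}. Then the covariance-update operator 𝒞(Q) = (I − 𝒦(Q)H)Q satisfies 0 ⪯ 𝒞(Q) ⪯ Q in the positive semidefinite order, and consequently |𝒞(Q)| ≤ |Q|. -/
open MeasureTheory ProbabilityTheory Matrix
open scoped BigOperators

noncomputable section

/-! The Joseph form `𝒞(Q) = (I - KH) Q (I - KH)ᵀ + K Γ Kᵀ` exhibits the update as a sum of
congruences of `Q` and `Γ`, hence positive semidefinite, while `Q - 𝒞(Q) = Q Hᵀ S⁻¹ H Q` with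
`S = H Q Hᵀ + Γ` is a congruence of `S⁻¹`. The operator norm of a positive operator is the
supremum of its Rayleigh quotient, which is monotone in the Loewner order. -/

namespace ContinuousLinearMap

variable {𝕜 E : Type*} [RCLike 𝕜] [NormedAddCommGroup E] [InnerProductSpace 𝕜 E]

lemma IsPositive.rayleighQuotient_nonneg {T : E →L[𝕜] E} (hT : T.IsPositive) (x : E) :
    0 ≤ T.rayleighQuotient x :=
  div_nonneg (hT.re_inner_nonneg_left x) (sq_nonneg _)

lemma rayleighQuotient_mono {S T : E →L[𝕜] E} (h : S ≤ T) (x : E) :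
    S.rayleighQuotient x ≤ T.rayleighQuotient x := by
  have hsub := ((le_def S T).mp h).rayleighQuotient_nonneg x
  rw [sub_eq_add_neg, rayleighQuotient_add, rayleighQuotient_neg_apply] at hsub
  linarith

lemma norm_le_norm_of_nonneg_of_le {S T : E →L[𝕜] E} (hS : 0 ≤ S) (h : S ≤ T) :
    ‖S‖ ≤ ‖T‖ := by
  rw [S.norm_eq_iSup_rayleighQuotient ((nonneg_iff_isPositive S).mp hS).isSymmetric]
  refine ciSup_le fun x => ?_
  calc |S.rayleighQuotient x| = S.rayleighQuotient x :=
        abs_of_nonneg (((nonneg_iff_isPositive S).mp hS).rayleighQuotient_nonneg x)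
    _ ≤ T.rayleighQuotient x := rayleighQuotient_mono h x
    _ ≤ ‖T‖ := (le_abs_self _).trans (T.rayleighQuotient_le_norm x)

end ContinuousLinearMap

lemma opNorm_le_opNorm_of_posSemidef {d : ℕ} {A B : Matrix (Fin d) (Fin d) ℝ}
    (hA : A.PosSemidef) (hBA : (B - A).PosSemidef) : opNorm A ≤ opNorm B := by
  refine ContinuousLinearMap.norm_le_norm_of_nonneg_of_le ?_ ?_
  · rw [ContinuousLinearMap.nonneg_iff_isPositive, LinearMap.isPositive_toContinuousLinearMap_iff]
    exact Matrix.isPositive_toEuclideanLin_iff.mpr hA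
  · rw [ContinuousLinearMap.le_def, ← map_sub, LinearMap.isPositive_toContinuousLinearMap_iff,
      ← map_sub]
    exact Matrix.isPositive_toEuclideanLin_iff.mpr hBA

section CovarianceUpdate

variable {d k : ℕ} (H : Matrix (Fin k) (Fin d) ℝ) (Γ : Matrix (Fin k) (Fin k) ℝ)
  (Q : Matrix (Fin d) (Fin d) ℝ)

lemma sub_covUpdate : Q - covUpdate H Γ Q = Q * Hᵀ * (H * Q * Hᵀ + Γ)⁻¹ * (H * Q) := by
  simp only [covUpdate, kGain, Matrix.sub_mul, Matrix.one_mul, sub_sub_cancel, Matrix.mul_assoc]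

lemma kGain_mul_innovation (hS : IsUnit (H * Q * Hᵀ + Γ).det) :
    kGain H Γ Q * (H * Q * Hᵀ + Γ) = Q * Hᵀ := by
  rw [kGain, Matrix.mul_assoc, Matrix.nonsing_inv_mul _ hS, Matrix.mul_one]

lemma covUpdate_eq_joseph (hS : IsUnit (H * Q * Hᵀ + Γ).det) :
    covUpdate H Γ Q = (1 - kGain H Γ Q * H) * Q * (1 - kGain H Γ Q * H)ᵀ
      + kGain H Γ Q * Γ * (kGain H Γ Q)ᵀ := by
  set K := kGain H Γ Q
  have hKΓ : (1 - K * H) * Q * Hᵀ = K * Γ := calc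
    (1 - K * H) * Q * Hᵀ = Q * Hᵀ - K * (H * Q * Hᵀ) := by
      simp only [Matrix.sub_mul, Matrix.one_mul, Matrix.mul_assoc]
    _ = K * Γ := by rw [← kGain_mul_innovation H Γ Q hS, Matrix.mul_add, add_sub_cancel_left]
  rw [Matrix.transpose_sub, Matrix.transpose_one, Matrix.transpose_mul, Matrix.mul_sub,
    Matrix.mul_one, ← Matrix.mul_assoc, hKΓ, covUpdate]
  abel

variable {Γ Q}

lemma posSemidef_sub_covUpdate (hQ : Q.PosSemidef) (hΓ : Γ.PosSemidef) :
    (Q - covUpdate H Γ Q).PosSemidef := by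
  have hS : (H * Q * Hᵀ + Γ).PosSemidef := by
    simpa using (hQ.mul_mul_conjTranspose_same H).add hΓ
  rw [sub_covUpdate]
  simpa [Matrix.mul_assoc, (Matrix.isHermitian_iff_isSymm.mp hQ.isHermitian).eq] using
    hS.inv.conjTranspose_mul_mul_same (H * Q)

lemma posSemidef_covUpdate (hQ : Q.PosSemidef) (hΓ : Γ.PosDef) :
    (covUpdate H Γ Q).PosSemidef := by
  have hS := Matrix.PosDef.posSemidef_add (hQ.mul_mul_conjTranspose_same H) hΓ
  rw [Matrix.conjTranspose_eq_transpose_of_trivial] at hS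
  rw [covUpdate_eq_joseph H Γ Q ((Matrix.isUnit_iff_isUnit_det _).mp hS.isUnit)]
  have h := (hQ.mul_mul_conjTranspose_same (1 - kGain H Γ Q * H)).add
    (hΓ.posSemidef.mul_mul_conjTranspose_same (kGain H Γ Q))
  rwa [Matrix.conjTranspose_eq_transpose_of_trivial,
    Matrix.conjTranspose_eq_transpose_of_trivial] at h

end CovarianceUpdate

/-- **Monotonicity of the covariance-update operator**: `0 ⪯ 𝒞(Q) ⪯ Q`, hence
`|𝒞(Q)| ≤ |Q|`. -/
theorem cov_update_psd (d k : ℕ) (Q : Matrix (Fin d) (Fin d) ℝ) (hQ : Q.PosSemidef)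
    (Γ : Matrix (Fin k) (Fin k) ℝ) (hΓ : Γ.PosDef) (H : Matrix (Fin k) (Fin d) ℝ) :
    (covUpdate H Γ Q).PosSemidef ∧ (Q - covUpdate H Γ Q).PosSemidef
      ∧ opNorm (covUpdate H Γ Q) ≤ opNorm Q := by
  have hlow := posSemidef_covUpdate H hQ hΓ
  have hup := posSemidef_sub_covUpdate H hQ hΓ.posSemidef
  exact ⟨hlow, hup, opNorm_le_opNorm_of_posSemidef hlow hup⟩

end
end
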